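/- Let env be an LTLf formula and h ∈ (2^(X∪Y))* a history; write h|_Y for the projection of h onto the Y-components. Define ⟦env⟧^h = {γ : for every agent strategy σ compatible with h, Trace(γ,σ) has h as a prefix and Trace(γ,σ) ⊨∀ env} and ⟦env, af(h)⟧ = {γ : for every agent strategy σ, h·Trace(γ,σ) ⊨∀ env}. Then: (i) for every γ ∈ ⟦env⟧^h there exists γ' ∈ ⟦env, af(h)⟧ such that γ(h|_Y · λ') = γ'(λ') for every λ' ∈ (2^Y)*; and (ii) for every γ' ∈ ⟦env, af(h)⟧ there exists γ ∈ ⟦env⟧^h such that γ(h|_Y · λ') = γ'(λ') for every λ' ∈ (2^Y)*. -/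

import Mathlib

/- Common framework: traces, strategies, LTLf, plays, deterministic automata and games,
   following the setting of "LTLf synthesis with duties and rights". -/

namespace RightsSynth

/-- An environment move: a propositional interpretation over the environment variables
(an element of `2^X`). -/
abbrev EMove (Xv : Type) := Xv → Bool

/-- An agent move: a propositional interpretation over the agent variables (element of `2^Y`). -/
abbrev AMove (Yv : Type) := Yv → Bool

/-- A letter of the alphabet `2^(X ∪ Y)`. -/
abbrev Letter (Xv Yv : Type) := EMove Xv × AMove Yv

/-- An infinite trace. -/
abbrev ITrace (Xv Yv : Type) := ℕ → Letter Xv Yv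

/-- A finite trace (history). -/
abbrev FTrace (Xv Yv : Type) := List (Letter Xv Yv)

/-- An environment strategy `γ : (2^Y)* → 2^X`. -/
abbrev EnvStrat (Xv Yv : Type) := List (AMove Yv) → EMove Xv

/-- An agent strategy `σ : (2^X)^+ → 2^Y` (only ever applied to nonempty lists). -/
abbrev AgStrat (Xv Yv : Type) := List (EMove Xv) → AMove Yv

variable {Xv Yv : Type}

/-- The `stop` action: all agent variables set to false. -/
def stopMove : AMove Yv := fun _ => false

/-- The finite prefix consisting of the first `n` letters of an infinite trace
(so `pref π (k+1)` is the prefix `π^k` of the paper). -/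
def pref (π : ITrace Xv Yv) (n : ℕ) : FTrace Xv Yv := (List.range n).map π

/-- A finite trace is a prefix of an infinite trace. -/
def IsIPrefix (h : FTrace Xv Yv) (π : ITrace Xv Yv) : Prop := pref π h.length = h

/-- Concatenation `h · π` of a finite history with an infinite trace. -/
def fappend (h : FTrace Xv Yv) (π : ITrace Xv Yv) : ITrace Xv Yv := fun n =>
  if hn : n < h.length then h.get ⟨n, hn⟩ else π (n - h.length)

/-- Shift of an infinite trace by `k` positions. -/
def shift (π : ITrace Xv Yv) (k : ℕ) : ITrace Xv Yv := fun n => π (k + n)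

/-- LTLf formulas over atoms `α`. -/
inductive LTLf (α : Type) : Type
  | atom : α → LTLf α
  | neg : LTLf α → LTLf α
  | conj : LTLf α → LTLf α → LTLf α
  | next : LTLf α → LTLf α
  | untl : LTLf α → LTLf α → LTLf α

/-- Evaluation of an atom (a variable in `X ∪ Y`) at a letter. -/
def evalAtom (l : Letter Xv Yv) : Xv ⊕ Yv → Bool
  | Sum.inl x => l.1 x
  | Sum.inr y => l.2 y

/-- `SatAt π φ i` is `π, i ⊨ φ` over the finite trace `π`. -/
def SatAt (π : FTrace Xv Yv) : LTLf (Xv ⊕ Yv) → ℕ → Prop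
  | .atom a, i => ∃ hi : i < π.length, evalAtom (π.get ⟨i, hi⟩) a = true
  | .neg φ, i => ¬ SatAt π φ i
  | .conj φ ψ, i => SatAt π φ i ∧ SatAt π ψ i
  | .next φ, i => i + 1 < π.length ∧ SatAt π φ (i + 1)
  | .untl φ ψ, i =>
      ∃ j, i ≤ j ∧ j < π.length ∧ SatAt π ψ j ∧ ∀ k, i ≤ k → k < j → SatAt π φ k

/-- `π ⊨ φ`, i.e. `π, 0 ⊨ φ`. -/
def Sat (π : FTrace Xv Yv) (φ : LTLf (Xv ⊕ Yv)) : Prop := SatAt π φ 0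

/-- An infinite trace satisfies `φ` on all (nonempty finite) prefixes: `π ⊨∀ φ`. -/
def SatAllPrefI (π : ITrace Xv Yv) (φ : LTLf (Xv ⊕ Yv)) : Prop :=
  ∀ n : ℕ, Sat (pref π (n + 1)) φ

/-- The finite prefixes of the unique trace compatible with `γ` and `σ`. -/
def traceAux (γ : EnvStrat Xv Yv) (σ : AgStrat Xv Yv) : ℕ → FTrace Xv Yv
  | 0 => []
  | n + 1 =>
      let p := traceAux γ σ n
      let x := γ (p.map Prod.snd)
      p ++ [(x, σ (p.map Prod.fst ++ [x]))]

/-- `Trace(γ,σ)`: the unique infinite trace compatible with `γ` and `σ`. -/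
def traceOf (γ : EnvStrat Xv Yv) (σ : AgStrat Xv Yv) : ITrace Xv Yv := fun n =>
  let p := traceAux γ σ n
  let x := γ (p.map Prod.snd)
  (x, σ (p.map Prod.fst ++ [x]))

/-- An infinite trace is compatible with an environment strategy. -/
def EnvCompat (γ : EnvStrat Xv Yv) (π : ITrace Xv Yv) : Prop :=
  ∀ n, (π n).1 = γ ((pref π n).map Prod.snd)

/-- An infinite trace is compatible with an agent strategy. -/
def AgCompat (σ : AgStrat Xv Yv) (π : ITrace Xv Yv) : Prop :=
  ∀ n, (π n).2 = σ ((pref π (n + 1)).map Prod.fst)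

/-- An agent strategy is compatible with a finite history `h`. -/
def AgCompatH (σ : AgStrat Xv Yv) (h : FTrace Xv Yv) : Prop :=
  ∀ k (hk : k < h.length), (h.get ⟨k, hk⟩).2 = σ ((h.take (k + 1)).map Prod.fst)

/-- An environment strategy is compatible with a finite history `h`. -/
def EnvCompatH (γ : EnvStrat Xv Yv) (h : FTrace Xv Yv) : Prop :=
  ∀ k (hk : k < h.length), (h.get ⟨k, hk⟩).1 = γ ((h.take k).map Prod.snd)

/-- A history that contains no `stop` action. -/
def StopFree (h : FTrace Xv Yv) : Prop := ∀ l ∈ h, l.2 ≠ stopMove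

/-- A stopping agent strategy: on every compatible trace it eventually plays `stop`
forever, and never plays `stop` before that. -/
def Stopping (σ : AgStrat Xv Yv) : Prop :=
  ∀ π : ITrace Xv Yv, AgCompat σ π →
    ∃ i, (∀ j, i ≤ j → (π j).2 = stopMove) ∧ ∀ j, j < i → (π j).2 ≠ stopMove

/-- `Play(γ,σ)`: the finite prefix of `Trace(γ,σ)` ending right before the first `stop`. -/
noncomputable def play (γ : EnvStrat Xv Yv) (σ : AgStrat Xv Yv) : FTrace Xv Yv :=
  pref (traceOf γ σ) (sInf {i | ((traceOf γ σ) i).2 = stopMove})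

/-- `γ ⊳ env`: the environment strategy `γ` enforces the safety specification `env`. -/
def EnforcesEnv (env : LTLf (Xv ⊕ Yv)) (γ : EnvStrat Xv Yv) : Prop :=
  ∀ σ : AgStrat Xv Yv, SatAllPrefI (traceOf γ σ) env

/-- `γ ∈ ⟦env, af(h)⟧`: strategies that start after `h` but enforce `env` when the
compatible traces are concatenated to `h`. -/
def EnvAfter (env : LTLf (Xv ⊕ Yv)) (h : FTrace Xv Yv) (γ : EnvStrat Xv Yv) : Prop :=
  ∀ σ : AgStrat Xv Yv, SatAllPrefI (fappend h (traceOf γ σ)) env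

/-- `γ ∈ ⟦env⟧^h`. -/
def EnvSpecH (env : LTLf (Xv ⊕ Yv)) (h : FTrace Xv Yv) (γ : EnvStrat Xv Yv) : Prop :=
  ∀ σ : AgStrat Xv Yv, AgCompatH σ h →
    IsIPrefix h (traceOf γ σ) ∧ SatAllPrefI (traceOf γ σ) env

/-- `σ ▷_h φ`: `σ` enforces `φ` with respect to the history `h`. -/
def EnforcesWrt (env φ : LTLf (Xv ⊕ Yv)) (σ : AgStrat Xv Yv) (h : FTrace Xv Yv) : Prop :=
  ∀ γ : EnvStrat Xv Yv, EnforcesEnv env γ → h <+: play γ σ → Sat (play γ σ) φ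

/-- `σ ▷_af(h) φ`: `σ` enforces `φ` after the history `h`. -/
def EnforcesAfter (env φ : LTLf (Xv ⊕ Yv)) (σ : AgStrat Xv Yv) (h : FTrace Xv Yv) : Prop :=
  ∀ γ : EnvStrat Xv Yv, EnforcesEnv env γ → h <+: play γ σ → SatAt (play γ σ) φ h.length

/-- A deterministic automaton (acceptance conditions are given separately). -/
structure DA (L : Type) (Q : Type) where
  init : Q
  next : Q → L → Q

variable {L Q Q1 Q2 Q3 : Type}

/-- The run of a DA on an infinite word, from state `q`: `runFrom q π n` is the `n`-th
state `q_n` of the run. -/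
def DA.runFrom (B : DA L Q) (q : Q) (π : ℕ → L) : ℕ → Q
  | 0 => q
  | n + 1 => B.next (B.runFrom q π n) (π n)

/-- The run of a DA on an infinite word from its initial state. -/
def DA.run (B : DA L Q) (π : ℕ → L) : ℕ → Q := B.runFrom B.init π

/-- The state reached by a DA after reading a finite word from state `q`. -/
def DA.runList (B : DA L Q) : Q → List L → Q
  | q, [] => q
  | q, a :: w => B.runList (B.next q a) w

/-- Product of two DAs. -/
def prod2 (A : DA L Q1) (B : DA L Q2) : DA L (Q1 × Q2) :=
  ⟨(A.init, B.init), fun q a => (A.next q.1 a, B.next q.2 a)⟩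

/-- Product of three DAs. -/
def prod3 (A : DA L Q1) (B : DA L Q2) (C : DA L Q3) : DA L (Q1 × Q2 × Q3) :=
  ⟨(A.init, B.init, C.init), fun q a => (A.next q.1 a, B.next q.2.1 a, C.next q.2.2 a)⟩

/-- The environment winning region of the safety game on a DA with safe set `S`. -/
def EnvWinSet (B : DA (Letter Xv Yv) Q) (S : Set Q) : Set Q :=
  {q | ∃ γ : EnvStrat Xv Yv, ∀ σ : AgStrat Xv Yv, ∀ k, B.runFrom q (traceOf γ σ) k ∈ S}

/-- Least-fixpoint approximants of the reachability game with target `R`. -/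
def AgnApprox (B : DA (Letter Xv Yv) Q) (R : Set Q) : ℕ → Set Q
  | 0 => R
  | l + 1 => AgnApprox B R l ∪
      {q | ∀ x : EMove Xv, ∃ y : AMove Yv, B.next q (x, y) ∈ AgnApprox B R l}

/-- Agent winning region of the reachability game (union of the approximants). -/
def Agn (B : DA (Letter Xv Yv) Q) (R : Set Q) : Set Q := ⋃ l, AgnApprox B R l

/-- Least-fixpoint approximants of the reachability game restricted to `Legal` states, where
the environment may only choose moves satisfying `Allowed` (this also subsumes the
reachability–safety reduction, with `Legal` the safe set, since non-`Legal` sink states never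
enter any approximant). -/
def RAgnApprox (B : DA (Letter Xv Yv) Q) (Legal : Set Q)
    (Allowed : Q → EMove Xv → Prop) (R : Set Q) : ℕ → Set Q
  | 0 => R ∩ Legal
  | l + 1 => RAgnApprox B Legal Allowed R l ∪
      {q | q ∈ Legal ∧ ∀ x : EMove Xv, Allowed q x →
        ∃ y : AMove Yv, B.next q (x, y) ∈ RAgnApprox B Legal Allowed R l}

/-- Agent winning region of the restricted reachability game. -/
def RAgn (B : DA (Letter Xv Yv) Q) (Legal : Set Q)
    (Allowed : Q → EMove Xv → Prop) (R : Set Q) : Set Q :=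
  ⋃ l, RAgnApprox B Legal Allowed R l

/-- The greatest subset `E ⊆ S` such that from every state of `E` the environment has a move
keeping the game in `E` whatever the agent responds (greatest fixpoint). -/
def EnvGfp (B : DA (Letter Xv Yv) Q) (S : Set Q) : Set Q :=
  ⋃₀ {E : Set Q | E ⊆ S ∧ ∀ q ∈ E, ∃ x : EMove Xv, ∀ y : AMove Yv, B.next q (x, y) ∈ E}


/-! Both directions rest on one simulation fact: if `γ` behaves after `h|_Y` like `γ'`, the agent
strategy `σ` behaves after `h|_X` like `σ'`, and `Trace(γ,σ)` starts with `h`, then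
`Trace(γ,σ) = h · Trace(γ',σ')`. For (i) take `γ' := γ(h|_Y · _)` and let `σ` replay `h` before
following `σ'`; for (ii) let `γ` replay `h` before following `γ'`, so that every agent strategy
compatible with `h` produces `h` as a prefix. -/

lemma traceAux_succ (γ : EnvStrat Xv Yv) (σ : AgStrat Xv Yv) (n : ℕ) :
    traceAux γ σ (n + 1) = traceAux γ σ n ++ [traceOf γ σ n] := rfl

lemma traceOf_apply (γ : EnvStrat Xv Yv) (σ : AgStrat Xv Yv) (n : ℕ) :
    traceOf γ σ n = (γ ((traceAux γ σ n).map Prod.snd),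
      σ ((traceAux γ σ n).map Prod.fst ++ [γ ((traceAux γ σ n).map Prod.snd)])) := rfl

lemma pref_succ (π : ITrace Xv Yv) (n : ℕ) : pref π (n + 1) = pref π n ++ [π n] := by
  simp [pref, List.range_succ]

lemma traceAux_eq_pref (γ : EnvStrat Xv Yv) (σ : AgStrat Xv Yv) (n : ℕ) :
    traceAux γ σ n = pref (traceOf γ σ) n := by
  induction n with
  | zero => rfl
  | succ n ih => rw [traceAux_succ, pref_succ, ih]

lemma pref_fappend_add (h : FTrace Xv Yv) (π : ITrace Xv Yv) (n : ℕ) :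
    pref (fappend h π) (h.length + n) = h ++ pref π n := by
  induction n with
  | zero =>
    refine List.ext_getElem (by simp [pref]) fun i hi _ => ?_
    simp only [pref, List.length_map, List.length_range, Nat.add_zero] at hi
    simp [pref, fappend, hi]
  | succ n ih => rw [← Nat.add_assoc, pref_succ, ih, pref_succ, List.append_assoc]; simp [fappend]

lemma eq_of_pref_add_eq {π π' : ITrace Xv Yv} (k : ℕ)
    (H : ∀ n, pref π (k + n) = pref π' (k + n)) : π = π' := by
  funext m
  simpa [pref, List.getElem?_range (show m < k + (m + 1) by omega)] using
    congrArg (·[m]?) (H (m + 1))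

lemma isIPrefix_traceOf {γ : EnvStrat Xv Yv} {σ : AgStrat Xv Yv} {h : FTrace Xv Yv}
    (hγ : EnvCompatH γ h) (hσ : AgCompatH σ h) : IsIPrefix h (traceOf γ σ) := by
  suffices ∀ k ≤ h.length, traceAux γ σ k = h.take k by
    rw [IsIPrefix, ← traceAux_eq_pref, this _ le_rfl, List.take_length]
  intro k
  induction k with
  | zero => simp [traceAux]
  | succ k ih =>
    intro hk
    have htake : h.take (k + 1) = h.take k ++ [h[k]] := by simp [List.take_add_one]
    have hx : γ ((h.take k).map Prod.snd) = h[k].1 := (hγ k hk).symm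
    have hy : σ ((h.take k).map Prod.fst ++ [h[k].1]) = h[k].2 := by
      rw [show (h.take k).map Prod.fst ++ [h[k].1] = (h.take (k + 1)).map Prod.fst by
        rw [htake, List.map_append]; rfl]
      exact (hσ k hk).symm
    rw [traceAux_succ, htake, traceOf_apply, ih (by omega), hx, hy]

lemma traceOf_eq_fappend {h : FTrace Xv Yv} {γ γ' : EnvStrat Xv Yv} {σ σ' : AgStrat Xv Yv}
    (hγ : ∀ lam, γ (h.map Prod.snd ++ lam) = γ' lam)
    (hσ : ∀ w, w ≠ [] → σ (h.map Prod.fst ++ w) = σ' w)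
    (hpre : IsIPrefix h (traceOf γ σ)) :
    traceOf γ σ = fappend h (traceOf γ' σ') := by
  have hshift : ∀ n, traceAux γ σ (h.length + n) = h ++ traceAux γ' σ' n := by
    intro n
    induction n with
    | zero => rw [Nat.add_zero, traceAux_eq_pref]; exact hpre.trans (List.append_nil h).symm
    | succ n ih =>
      rw [← Nat.add_assoc, traceAux_succ, traceAux_succ, traceOf_apply, traceOf_apply, ih,
        List.map_append, List.map_append, hγ, List.append_assoc (h.map Prod.fst), hσ _ (by simp),
        List.append_assoc]
  refine eq_of_pref_add_eq h.length fun n => ?_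
  rw [← traceAux_eq_pref, hshift, pref_fappend_add, traceAux_eq_pref]

-- `σ` answers `X_0 … X_k` with `Y_k`, hence the index `w.length - 1`.
def agReplay (h : FTrace Xv Yv) (σ : AgStrat Xv Yv) : AgStrat Xv Yv := fun w =>
  if w.length ≤ h.length then (h.getD (w.length - 1) default).2 else σ (w.drop h.length)

lemma agCompatH_agReplay (h : FTrace Xv Yv) (σ : AgStrat Xv Yv) :
    AgCompatH (agReplay h σ) h := by
  intro k hk
  simp [agReplay, Nat.succ_le_of_lt hk, List.getElem?_eq_getElem hk]

lemma agReplay_append (h : FTrace Xv Yv) (σ : AgStrat Xv Yv) {w : List (EMove Xv)}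
    (hw : w ≠ []) : agReplay h σ (h.map Prod.fst ++ w) = σ w := by
  simp [agReplay, List.drop_left', hw]

def envReplay (h : FTrace Xv Yv) (γ : EnvStrat Xv Yv) : EnvStrat Xv Yv := fun lam =>
  if lam.length < h.length then (h.getD lam.length default).1 else γ (lam.drop h.length)

lemma envCompatH_envReplay (h : FTrace Xv Yv) (γ : EnvStrat Xv Yv) :
    EnvCompatH (envReplay h γ) h := by
  intro k hk
  simp [envReplay, hk, le_of_lt hk]

lemma envReplay_append (h : FTrace Xv Yv) (γ : EnvStrat Xv Yv) (lam : List (AMove Yv)) :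
    envReplay h γ (h.map Prod.snd ++ lam) = γ lam := by
  simp [envReplay, List.drop_left']

theorem statement10_general {Xv Yv : Type}
    (env : LTLf (Xv ⊕ Yv)) (h : FTrace Xv Yv) :
    (∀ γ : EnvStrat Xv Yv, EnvSpecH env h γ →
        ∃ γ' : EnvStrat Xv Yv, EnvAfter env h γ' ∧
          ∀ lam : List (AMove Yv), γ (h.map Prod.snd ++ lam) = γ' lam) ∧
      ∀ γ' : EnvStrat Xv Yv, EnvAfter env h γ' →
        ∃ γ : EnvStrat Xv Yv, EnvSpecH env h γ ∧
          ∀ lam : List (AMove Yv), γ (h.map Prod.snd ++ lam) = γ' lam := by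
  constructor
  · intro γ hγ
    refine ⟨fun lam => γ (h.map Prod.snd ++ lam), fun σ => ?_, fun _ => rfl⟩
    obtain ⟨hpre, hsat⟩ := hγ (agReplay h σ) (agCompatH_agReplay h σ)
    rw [← traceOf_eq_fappend (fun _ => rfl) (fun _ hw => agReplay_append h σ hw) hpre]
    exact hsat
  · intro γ' hγ'
    refine ⟨envReplay h γ', fun σ hσ => ?_, envReplay_append h γ'⟩
    have hpre := isIPrefix_traceOf (envCompatH_envReplay h γ') hσ
    refine ⟨hpre, ?_⟩
    rw [traceOf_eq_fappend (σ' := fun w => σ (h.map Prod.fst ++ w)) (envReplay_append h γ')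
      (fun _ _ => rfl) hpre]
    exact hγ' _

/-- Lemma 5: correspondence between `⟦env⟧^h` and `⟦env, af(h)⟧`:
(i) every `γ ∈ ⟦env⟧^h` agrees after `h|_Y` with some `γ' ∈ ⟦env, af(h)⟧`, and
(ii) every `γ' ∈ ⟦env, af(h)⟧` arises this way from some `γ ∈ ⟦env⟧^h`. -/
theorem statement10 {Xv Yv : Type} [Fintype Xv] [Fintype Yv]
    (env : LTLf (Xv ⊕ Yv)) (h : FTrace Xv Yv) :
    (∀ γ : EnvStrat Xv Yv, EnvSpecH env h γ →
        ∃ γ' : EnvStrat Xv Yv, EnvAfter env h γ' ∧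
          ∀ lam : List (AMove Yv), γ (h.map Prod.snd ++ lam) = γ' lam) ∧
      ∀ γ' : EnvStrat Xv Yv, EnvAfter env h γ' →
        ∃ γ : EnvStrat Xv Yv, EnvSpecH env h γ ∧
          ∀ lam : List (AMove Yv), γ (h.map Prod.snd ++ lam) = γ' lam :=
  statement10_general env h

end RightsSynth
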